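/- Let $A_T$ be an $n \times k$ real matrix with $\lambda_{\min}(A_T^\top A_T) \ge 1 - \delta$ for some $\delta \in [0,1)$, let $\sigma, \sigma_{sys} > 0$, and set $r = \sigma_{sys}^2 / \sigma^2$. Let $P = (A_T^\top A_T)^{-1} \sigma^2 + \sigma_{sys}^2 I_k$ and $M = A_T^\top A_T + \sigma^2 P^{-1}$. Then $\|M^{-1}\|_2 \le \frac{1}{1 - \delta + \frac{1}{(1-\delta)^{-1} + r}}$. -/

import Mathlib

/-!
Diagonalising `B = A_Tᵀ A_T`, the matrix `M⁻¹` is `g(B)` for the scalar function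
`g x = (x + (x⁻¹ + r)⁻¹)⁻¹`, since `σ² (σ² x⁻¹ + σ_sys²)⁻¹ = (x⁻¹ + r)⁻¹`. The spectral norm of
`g(B)` is the largest `|g λ|` over the eigenvalues `λ` of `B`; these are all at least `1 - δ`, and
`g` is decreasing on `(0, ∞)`, so the maximum is at most `g (1 - δ)`.
-/

open Matrix

/-- Spectral norm (induced 2-norm) of a real matrix. -/
noncomputable def matSpectralNorm {m n : ℕ} (A : Matrix (Fin m) (Fin n) ℝ) : ℝ :=
  ‖LinearMap.toContinuousLinearMap (Matrix.toEuclideanLin A)‖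

/-- Minimum eigenvalue of a symmetric (Hermitian) real matrix. -/
noncomputable def lambdaMin {k : ℕ} (M : Matrix (Fin k) (Fin k) ℝ) : ℝ :=
  if h : M.IsHermitian then ⨅ i, h.eigenvalues i else 0

open scoped Matrix.Norms.L2Operator

lemma monotoneOn_add_inv_add_inv {r : ℝ} (hr : 0 ≤ r) :
    MonotoneOn (fun x : ℝ ↦ x + (x⁻¹ + r)⁻¹) (Set.Ioi 0) := by
  intro a (ha : 0 < a) x (hx : 0 < x) hax
  dsimp only
  gcongr

lemma mul_inv_mul_inv_add {s x : ℝ} (hs : s ≠ 0) (t : ℝ) :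
    s * (s * x⁻¹ + t)⁻¹ = (x⁻¹ + t / s)⁻¹ := by
  rw [← inv_inv (s * _), mul_inv, inv_inv, mul_add, inv_mul_cancel_left₀ hs, inv_mul_eq_div]

namespace Matrix

variable {n : Type*} [Fintype n] [DecidableEq n]

lemma continuousOn_spectrum_real (A : Matrix n n ℝ) (f : ℝ → ℝ) :
    ContinuousOn f (spectrum ℝ A) :=
  A.finite_real_spectrum.continuousOn f

lemma cfc_inv_eq_nonsing_inv {A : Matrix n n ℝ} (hA : IsSelfAdjoint A) (f : ℝ → ℝ)
    (hf : ∀ x ∈ spectrum ℝ A, f x ≠ 0) :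
    cfc (fun x ↦ (f x)⁻¹) A = (cfc f A)⁻¹ := by
  rw [nonsing_inv_eq_ringInverse, cfc_inv f A hf (A.continuousOn_spectrum_real f)]

lemma inv_add_smul_inv_smul_inv_add_smul_one_eq_cfc {B : Matrix n n ℝ} (hB : IsSelfAdjoint B)
    (hpos : ∀ x ∈ spectrum ℝ B, 0 < x) {s t : ℝ} (hs : 0 < s) (ht : 0 ≤ t) :
    (B + s • (s • B⁻¹ + t • 1)⁻¹)⁻¹ = cfc (fun x ↦ (x + s * (s * x⁻¹ + t)⁻¹)⁻¹) B := by
  have hcont := B.continuousOn_spectrum_real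
  have hBinv : B⁻¹ = cfc (fun x : ℝ ↦ x⁻¹) B := by
    rw [cfc_inv_eq_nonsing_inv hB (fun x ↦ x) fun x hx ↦ (hpos x hx).ne', cfc_id' ℝ B]
  have hP : s • B⁻¹ + t • 1 = cfc (fun x ↦ s * x⁻¹ + t) B := by
    rw [cfc_add (a := B) (fun x ↦ s * x⁻¹) (fun _ ↦ t) (hcont _) (hcont _),
      cfc_const_mul s _ B (hcont _), cfc_const t B, ← hBinv, Algebra.algebraMap_eq_smul_one]
  have hPinv : (s • B⁻¹ + t • 1)⁻¹ = cfc (fun x ↦ (s * x⁻¹ + t)⁻¹) B := by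
    rw [hP, cfc_inv_eq_nonsing_inv hB _ fun x hx ↦ ?_]
    have := hpos x hx
    positivity
  have hM : B + s • (s • B⁻¹ + t • 1)⁻¹ = cfc (fun x ↦ x + s * (s * x⁻¹ + t)⁻¹) B := by
    rw [cfc_add (a := B) (fun x ↦ x) (fun x ↦ s * (s * x⁻¹ + t)⁻¹) (hcont _) (hcont _),
      cfc_const_mul s _ B (hcont _), cfc_id' ℝ B, hPinv]
  rw [hM, cfc_inv_eq_nonsing_inv hB _ fun x hx ↦ ?_]
  have := hpos x hx
  positivity

end Matrix

lemma le_of_mem_spectrum_of_le_lambdaMin {k : ℕ} {B : Matrix (Fin k) (Fin k) ℝ}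
    (hB : B.IsHermitian) {c : ℝ} (hc : c ≤ lambdaMin B) {x : ℝ} (hx : x ∈ spectrum ℝ B) :
    c ≤ x := by
  obtain ⟨i, rfl⟩ := hB.spectrum_real_eq_range_eigenvalues ▸ hx
  rw [lambdaMin, dif_pos hB] at hc
  exact hc.trans (ciInf_le (Finite.bddBelow_range _) i)

lemma matSpectralNorm_eq_norm {m n : ℕ} (A : Matrix (Fin m) (Fin n) ℝ) :
    matSpectralNorm A = ‖A‖ := rfl

theorem Minv_bound_after_support_change_general {n k : ℕ}
    (A_T : Matrix (Fin n) (Fin k) ℝ) (δ : ℝ) (hδ1 : δ < 1)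
    (hmin : 1 - δ ≤ lambdaMin (A_Tᵀ * A_T))
    (σ σsys : ℝ) (hσ : 0 < σ)
    (r : ℝ) (hr : r = σsys ^ 2 / σ ^ 2)
    (P : Matrix (Fin k) (Fin k) ℝ)
    (hP : P = σ ^ 2 • (A_Tᵀ * A_T)⁻¹ + σsys ^ 2 • (1 : Matrix (Fin k) (Fin k) ℝ))
    (M : Matrix (Fin k) (Fin k) ℝ) (hM : M = A_Tᵀ * A_T + σ ^ 2 • P⁻¹) :
    matSpectralNorm M⁻¹ ≤ 1 / (1 - δ + 1 / ((1 - δ)⁻¹ + r)) := by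
  have hδ : 0 < 1 - δ := by linarith
  have hr0 : 0 ≤ r := hr ▸ by positivity
  have hB : (A_Tᵀ * A_T).IsHermitian := by
    simpa using isHermitian_conjTranspose_mul_self A_T
  have hspec x (hx : x ∈ spectrum ℝ (A_Tᵀ * A_T)) : 1 - δ ≤ x :=
    le_of_mem_spectrum_of_le_lambdaMin hB hmin hx
  rw [hM, hP, inv_add_smul_inv_smul_inv_add_smul_one_eq_cfc hB.isSelfAdjoint
    (fun x hx ↦ hδ.trans_le (hspec x hx)) (by positivity) (by positivity),
    matSpectralNorm_eq_norm, one_div, one_div]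
  refine norm_cfc_le (by positivity) fun x hx ↦ ?_
  have hδx := hspec x hx
  have hx₀ : 0 < x := hδ.trans_le hδx
  rw [mul_inv_mul_inv_add (by positivity), ← hr, norm_inv, Real.norm_of_nonneg (by positivity)]
  exact inv_anti₀ (by positivity) (monotoneOn_add_inv_add_inv hr0 hδ hx₀ hδx)

/-- bound on `‖M⁻¹‖₂` after a support change, i.e. when
`P = (A_Tᵀ A_T)⁻¹ σ² + σ_sys² I` and `M = A_Tᵀ A_T + σ² P⁻¹`:
`‖M⁻¹‖₂ ≤ 1 / (1 - δ + 1/((1-δ)⁻¹ + r))` with `r = σ_sys²/σ²`. -/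
theorem Minv_bound_after_support_change {n k : ℕ}
    (A_T : Matrix (Fin n) (Fin k) ℝ) (δ : ℝ) (hδ0 : 0 ≤ δ) (hδ1 : δ < 1)
    (hmin : 1 - δ ≤ lambdaMin (A_Tᵀ * A_T))
    (σ σsys : ℝ) (hσ : 0 < σ) (hσsys : 0 < σsys)
    (r : ℝ) (hr : r = σsys ^ 2 / σ ^ 2)
    (P : Matrix (Fin k) (Fin k) ℝ)
    (hP : P = σ ^ 2 • (A_Tᵀ * A_T)⁻¹ + σsys ^ 2 • (1 : Matrix (Fin k) (Fin k) ℝ))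
    (M : Matrix (Fin k) (Fin k) ℝ) (hM : M = A_Tᵀ * A_T + σ ^ 2 • P⁻¹) :
    matSpectralNorm M⁻¹ ≤ 1 / (1 - δ + 1 / ((1 - δ)⁻¹ + r)) :=
  Minv_bound_after_support_change_general A_T δ hδ1 hmin σ σsys hσ r hr P hP M hM
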